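/- For every natural number n, applying the operator (X + sD)^n to the constant polynomial 1 yields (X + sD)^n 1 = H_n(x,s) = Σ_{j=0}^{⌊n/2⌋} s^j · n!/(2^j · j! · (n-2j)!) · x^{n-2j}. -/

import Mathlib

/- STATEMENT 2:
(X + sD)^n 1 = H_n(x,s) = Σ_{j=0}^{⌊n/2⌋} s^j · n!/(2^j · j! · (n-2j)!) · x^{n-2j}. -/

noncomputable section

/-- The field `ℚ(s)` of rational functions in an indeterminate `s`. -/
abbrev F : Type := RatFunc ℚ

/-- The indeterminate `s`. -/
def s : F := RatFunc.X

/-- The operator `X` of multiplication by `x` on `F[x]`. -/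
def Xop : Module.End F (Polynomial F) := LinearMap.mulLeft F Polynomial.X

/-- The operator `D` of formal differentiation `d/dx` on `F[x]`. -/
def D : Module.End F (Polynomial F) := Polynomial.derivative

/-- The Hermite-type polynomials: `H 0 = 1`, `H 1 = x`,
`H n = x·H (n-1) + (n-1)·s·H (n-2)` for `n ≥ 2`. -/
def H : ℕ → Polynomial F
  | 0 => 1
  | 1 => Polynomial.X
  | n + 2 => Polynomial.X * H (n + 1) + Polynomial.C (((n : F) + 1) * s) * H n


/-! `D` lowers `H` like a derivative of an Appell sequence, `D H_{n+1} = (n+1) H_n`, so the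
three-term recurrence of `H` reads `H_{n+1} = (X + sD) H_n`. In the closed form, the coefficient
of `s^j x^{n-2j}` is `binom(n, 2j) (2j-1)!!`, which obeys the same three-term recurrence by
Pascal's rule. -/

open Polynomial Finset
open scoped Nat

/-- `n! / (2^j j! (n-2j)!)` without division (the number of `j`-edge matchings in `K_n`);
it vanishes for `n < 2j`, so sums of it may run over any long enough range. -/
def hermiteCoeff (n j : ℕ) : ℕ := n.choose (2 * j) * (2 * j - 1)‼

@[simp]
lemma hermiteCoeff_zero_right (n : ℕ) : hermiteCoeff n 0 = 1 := by
  simp [hermiteCoeff]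

lemma hermiteCoeff_eq_zero_of_lt {n j : ℕ} (h : n < 2 * j) : hermiteCoeff n j = 0 := by
  simp [hermiteCoeff, Nat.choose_eq_zero_of_lt h]

lemma hermiteCoeff_add_two (n j : ℕ) :
    hermiteCoeff (n + 2) (j + 1) = hermiteCoeff (n + 1) (j + 1) + (n + 1) * hermiteCoeff n j := by
  simp only [hermiteCoeff, show 2 * (j + 1) = 2 * j + 1 + 1 by ring, Nat.add_sub_cancel,
    Nat.choose_succ_succ' (n + 1) (2 * j + 1), Nat.doubleFactorial_add_one (2 * j)]
  rw [← mul_assoc (n + 1), Nat.add_one_mul_choose_eq]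
  ring

lemma two_pow_mul_factorial_mul_doubleFactorial (j : ℕ) :
    2 ^ j * j ! * (2 * j - 1)‼ = (2 * j)! := by
  cases j with
  | zero => rfl
  | succ j =>
    rw [← Nat.doubleFactorial_two_mul, show 2 * (j + 1) = 2 * j + 1 + 1 by ring,
      Nat.factorial_eq_mul_doubleFactorial, Nat.add_sub_cancel]

lemma hermiteCoeff_mul_eq_factorial {n j : ℕ} (h : 2 * j ≤ n) :
    2 ^ j * j ! * (n - 2 * j)! * hermiteCoeff n j = n ! := by
  rw [← Nat.choose_mul_factorial_mul_factorial h, ← two_pow_mul_factorial_mul_doubleFactorial,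
    hermiteCoeff]
  ring

lemma cast_hermiteCoeff_eq_div {K : Type*} [Field K] [CharZero K] {n j : ℕ} (h : 2 * j ≤ n) :
    (hermiteCoeff n j : K) = n ! / (2 ^ j * j ! * (n - 2 * j)!) := by
  rw [eq_div_iff (by simp [Nat.factorial_ne_zero]), mul_comm]
  exact_mod_cast hermiteCoeff_mul_eq_factorial h

section HermiteSum

variable {R : Type*} [CommSemiring R]

def hermiteSum (t : R) (n : ℕ) : R[X] :=
  ∑ j ∈ range (n / 2 + 1), C (t ^ j * hermiteCoeff n j) * X ^ (n - 2 * j)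

lemma hermiteSum_eq_sum_range (t : R) {n N : ℕ} (h : n / 2 < N) :
    hermiteSum t n = ∑ j ∈ range N, C (t ^ j * hermiteCoeff n j) * X ^ (n - 2 * j) := by
  refine sum_subset (range_subset_range.2 (by omega)) fun j _ hj => ?_
  rw [hermiteCoeff_eq_zero_of_lt (by simp at hj; omega)]
  simp

lemma hermiteSum_eq_sum_range_succ' (t : R) {n N : ℕ} (h : n / 2 ≤ N) :
    hermiteSum t n =
      ∑ j ∈ range N, C (t ^ (j + 1) * hermiteCoeff n (j + 1)) * X ^ (n - 2 * (j + 1)) + X ^ n := by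
  rw [hermiteSum_eq_sum_range t (N := N + 1) (by omega), sum_range_succ']
  simp

lemma hermiteSum_add_two (t : R) (n : ℕ) :
    hermiteSum t (n + 2) = X * hermiteSum t (n + 1) + C (((n : R) + 1) * t) * hermiteSum t n := by
  have hterm : ∀ j, C (t ^ (j + 1) * hermiteCoeff (n + 2) (j + 1)) * X ^ (n + 2 - 2 * (j + 1)) =
      X * (C (t ^ (j + 1) * hermiteCoeff (n + 1) (j + 1)) * X ^ (n + 1 - 2 * (j + 1))) +
        C (((n : R) + 1) * t) * (C (t ^ j * hermiteCoeff n j) * X ^ (n - 2 * j)) := by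
    intro j
    rw [hermiteCoeff_add_two, show n + 2 - 2 * (j + 1) = n - 2 * j by omega]
    -- `X * X ^ (n + 1 - 2 * (j + 1)) = X ^ (n - 2 * j)` fails only where the coefficient is `0`.
    rcases le_or_gt (2 * (j + 1)) (n + 1) with hj | hj
    · rw [mul_left_comm X, ← pow_succ', show n + 1 - 2 * (j + 1) + 1 = n - 2 * j by omega]
      push_cast
      simp only [map_mul, map_add, map_pow, map_natCast, map_one]
      ring
    · rw [hermiteCoeff_eq_zero_of_lt hj]
      simp only [Nat.cast_zero, zero_add, mul_zero, map_zero, zero_mul, Nat.cast_mul, Nat.cast_add,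
        Nat.cast_one, map_mul, map_add, map_pow, map_natCast, map_one]
      ring
  rw [hermiteSum_eq_sum_range_succ' t (N := n + 1) (by omega),
    hermiteSum_eq_sum_range_succ' t (N := n + 1) (by omega),
    hermiteSum_eq_sum_range t (n := n) (N := n + 1) (by omega), mul_add, mul_sum, mul_sum,
    ← pow_succ', sum_congr rfl fun j _ => hterm j, sum_add_distrib]
  ring

end HermiteSum

lemma hermiteSum_eq_sum_div {K : Type*} [Field K] [CharZero K] (t : K) (n : ℕ) :
    hermiteSum t n = ∑ j ∈ range (n / 2 + 1),
      C (t ^ j * n ! / (2 ^ j * j ! * (n - 2 * j)!)) * X ^ (n - 2 * j) := by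
  refine sum_congr rfl fun j hj => ?_
  rw [cast_hermiteCoeff_eq_div (by simp at hj; omega), mul_div_assoc]

lemma derivative_H_succ (n : ℕ) : derivative (H (n + 1)) = C ((n : F) + 1) * H n := by
  induction n using Nat.twoStepInduction with
  | zero => simp [H]
  | one =>
    simp only [H, derivative_add, derivative_mul, derivative_X, derivative_C, derivative_one]
    simp only [map_add, map_mul, map_one, map_natCast]
    push_cast
    ring
  | more n ih ih' =>
    rw [H, derivative_add, derivative_mul, derivative_mul, derivative_X, derivative_C, ih, ih', H]
    simp only [map_add, map_mul, map_one, map_natCast]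
    push_cast
    ring

lemma H_succ (n : ℕ) : H (n + 1) = X * H n + C s * derivative (H n) := by
  cases n with
  | zero => simp [H]
  | succ n =>
    rw [derivative_H_succ, H]
    simp only [map_mul]
    ring

lemma Xop_add_smul_D_apply (p : F[X]) : (Xop + s • D) p = X * p + C s * derivative p := by
  simp [Xop, D, smul_eq_C_mul]

lemma Xop_add_smul_D_pow_apply_one (n : ℕ) : ((Xop + s • D) ^ n) 1 = H n := by
  induction n with
  | zero => rfl
  | succ n ih => rw [pow_succ', Module.End.mul_apply, ih, Xop_add_smul_D_apply, H_succ]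

lemma H_eq_hermiteSum (n : ℕ) : H n = hermiteSum s n := by
  induction n using Nat.twoStepInduction with
  | zero => simp [H, hermiteSum]
  | one => simp [H, hermiteSum]
  | more n ih ih' => rw [H, hermiteSum_add_two, ih, ih']

theorem apply_to_one (n : ℕ) :
    ((Xop + s • D) ^ n) (1 : Polynomial F) = H n ∧
    H n = ∑ j ∈ Finset.range (n / 2 + 1),
      Polynomial.C (s ^ j * (n.factorial : F) /
          (2 ^ j * (j.factorial : F) * ((n - 2 * j).factorial : F))) *
        Polynomial.X ^ (n - 2 * j) :=
  ⟨Xop_add_smul_D_pow_apply_one n, (H_eq_hermiteSum n).trans (hermiteSum_eq_sum_div s n)⟩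

end
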